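/- For every natural number N ≥ 1 and |q|<1: ∑_{n=1}^{N} q^n/(1-q^n) + ∑_{n=1}^{N} [N choose n] q^{n(n+1)}/((q;q)_n (1-q^n)) = ∑_{n=1}^{N} q^n/((1-q^n)(q;q)_n). -/
import Mathlib


open Finset

/-- q-Pochhammer symbol (a;q)_n = ∏_{k=0}^{n-1} (1 - a q^k). -/
noncomputable def qP (a q : ℂ) (n : ℕ) : ℂ := ∏ k ∈ Finset.range n, (1 - a * q ^ k)

/-- Gaussian (q-)binomial coefficient [N choose n]_q. -/
noncomputable def qBinom (q : ℂ) (N n : ℕ) : ℂ := qP q q N / (qP q q n * qP q q (N - n))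

lemma qP_zero (q : ℂ) : qP q q 0 = 1 := by simp [qP]
lemma qP_succ (q : ℂ) (n : ℕ) : qP q q (n + 1) = qP q q n * (1 - q ^ (n + 1)) := by
  rw [qP, Finset.prod_range_succ, ← pow_succ']; rfl
lemma qP_ne (q : ℂ) (hq : ∀ k : ℕ, 1 - q ^ (k + 1) ≠ 0) (n : ℕ) : qP q q n ≠ 0 := by
  induction n with
  | zero => simp [qP_zero]
  | succ n ih => rw [qP_succ]; exact mul_ne_zero ih (hq n)

lemma pascal1 (q : ℂ) (hq : ∀ k : ℕ, 1 - q ^ (k + 1) ≠ 0) {A b : ℕ} (h : b < A) :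
    qBinom q (A + 1) (b + 1) = qBinom q A b + q ^ (b + 1) * qBinom q A (b + 1) := by
  obtain ⟨c, rfl⟩ : ∃ c, A = b + 1 + c := ⟨A - (b + 1), by omega⟩
  rw [qBinom, qBinom, qBinom,
    show b + 1 + c + 1 - (b + 1) = c + 1 by omega,
    show b + 1 + c - b = c + 1 by omega,
    show b + 1 + c - (b + 1) = c by omega,
    qP_succ q (b + 1 + c), qP_succ q b, qP_succ q c]
  have hb := qP_ne q hq b
  have hc := qP_ne q hq c
  have h1 := hq b
  have h2 := hq c
  field_simp
  ring

lemma pascal2 (q : ℂ) (hq : ∀ k : ℕ, 1 - q ^ (k + 1) ≠ 0) {A b : ℕ} (h : b < A) :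
    qBinom q (A + 1) (b + 1) = qBinom q A (b + 1) + q ^ (A - b) * qBinom q A b := by
  obtain ⟨c, rfl⟩ : ∃ c, A = b + 1 + c := ⟨A - (b + 1), by omega⟩
  rw [qBinom, qBinom, qBinom,
    show b + 1 + c + 1 - (b + 1) = c + 1 by omega,
    show b + 1 + c - b = c + 1 by omega,
    show b + 1 + c - (b + 1) = c by omega,
    qP_succ q (b + 1 + c), qP_succ q b, qP_succ q c]
  have hb := qP_ne q hq b
  have hc := qP_ne q hq c
  have h1 := hq b
  have h2 := hq c
  field_simp
  ring

lemma qBinom_ratio (q : ℂ) (hq : ∀ k : ℕ, 1 - q ^ (k + 1) ≠ 0) {M n : ℕ} (h : n ≤ M) :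
    qBinom q (M + 1) (n + 1) * (1 - q ^ (n + 1)) = qBinom q M n * (1 - q ^ (M + 1)) := by
  obtain ⟨c, rfl⟩ : ∃ c, M = n + c := ⟨M - n, by omega⟩
  rw [qBinom, qBinom,
    show n + c + 1 - (n + 1) = c by omega,
    show n + c - n = c by omega,
    qP_succ q (n + c), qP_succ q n]
  have hn := qP_ne q hq n
  have hc := qP_ne q hq c
  have h1 := hq n
  field_simp

lemma qBinom_self (q : ℂ) (hq : ∀ k : ℕ, 1 - q ^ (k + 1) ≠ 0) (N : ℕ) :
    qBinom q N N = 1 := by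
  rw [qBinom, Nat.sub_self, qP_zero, mul_one, div_self (qP_ne q hq N)]

lemma Tstep (q : ℂ) (hq : ∀ k : ℕ, 1 - q ^ (k + 1) ≠ 0) (j M : ℕ) :
    ∑ k ∈ range (M + 1), qBinom q (M + j + 1) (k + j + 1) * (q ^ (k * (k + j + 1)) / qP q q k)
      = ∑ k ∈ range (M + 1), qBinom q (M + j) (k + j) * (q ^ (k * (k + j)) / qP q q k) := by
  have hP := qP_ne q hq
  calc
    ∑ k ∈ range (M + 1), qBinom q (M + j + 1) (k + j + 1) * (q ^ (k * (k + j + 1)) / qP q q k)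
        = ∑ k ∈ range M,
            (qBinom q (M + j) (k + j) * (q ^ (k * (k + j) + k) / qP q q k)
              + qBinom q (M + j) (k + 1 + j) *
                  ((1 - q ^ (k + 1)) * q ^ ((k + 1) * (k + 1 + j)) / qP q q (k + 1)))
          + qBinom q (M + j) (M + j) * (q ^ (M * (M + j) + M) / qP q q M) := by
      rw [Finset.sum_range_succ]
      congr 1
      · apply Finset.sum_congr rfl; intro k hk
        have hkM : k < M := Finset.mem_range.mp hk
        rw [show k + 1 + j = k + j + 1 by omega,
          pascal1 q hq (show k + j < M + j by omega), qP_succ q k,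
          mul_comm (qP q q k) (1 - q ^ (k + 1)),
          mul_div_mul_left _ _ (hq k)]
        ring
      · rw [qBinom_self q hq, qBinom_self q hq,
          show M * (M + j + 1) = M * (M + j) + M by ring]
    _ = (∑ k ∈ range M, qBinom q (M + j) (k + j) * (q ^ (k * (k + j) + k) / qP q q k)
          + qBinom q (M + j) (M + j) * (q ^ (M * (M + j) + M) / qP q q M))
        + ∑ k ∈ range M, qBinom q (M + j) (k + 1 + j) *
            ((1 - q ^ (k + 1)) * q ^ ((k + 1) * (k + 1 + j)) / qP q q (k + 1)) := by
      rw [Finset.sum_add_distrib]; ring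
    _ = ∑ k ∈ range (M + 1), qBinom q (M + j) (k + j) * (q ^ (k * (k + j) + k) / qP q q k)
        + ∑ k ∈ range (M + 1), qBinom q (M + j) (k + j) *
            ((1 - q ^ k) * q ^ (k * (k + j)) / qP q q k) := by
      rw [Finset.sum_range_succ]
      congr 1
      rw [Finset.sum_range_succ']
      simp
    _ = ∑ k ∈ range (M + 1), qBinom q (M + j) (k + j) * (q ^ (k * (k + j)) / qP q q k) := by
      rw [← Finset.sum_add_distrib]
      apply Finset.sum_congr rfl; intro k hk
      have h0 := hP k
      field_simp
      ring

lemma qBinom_zero (q : ℂ) (hq : ∀ k : ℕ, 1 - q ^ (k + 1) ≠ 0) (N : ℕ) :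
    qBinom q N 0 = 1 := by
  rw [qBinom, Nat.sub_zero, qP_zero, one_mul, div_self (qP_ne q hq N)]

lemma durfee (q : ℂ) (hq : ∀ k : ℕ, 1 - q ^ (k + 1) ≠ 0) :
    ∀ M j : ℕ, ∑ k ∈ range (M + 1), qBinom q (M + j) (k + j) * (q ^ (k * (k + j)) / qP q q k)
      = 1 / qP q q M := by
  have hP := qP_ne q hq
  intro M
  induction M with
  | zero =>
    intro j
    simp [Finset.sum_range_one, qBinom_self q hq, qP_zero]
  | succ M ih =>
    have ihh : ∑ k ∈ range (M + 1), qBinom q M k * (q ^ (k * k) / qP q q k)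
        = 1 / qP q q M := by simpa using ih 0
    have ih1 : ∑ k ∈ range (M + 1), qBinom q (M + 1) (k + 1) * (q ^ (k * (k + 1)) / qP q q k)
        = 1 / qP q q M := ih 1
    have t0 : ∑ k ∈ range (M + 1 + 1), qBinom q (M + 1) k * (q ^ (k * k) / qP q q k)
        = 1 / qP q q (M + 1) := by
      have split : ∑ n ∈ range (M + 1), qBinom q (M + 1) (n + 1) *
            (q ^ ((n + 1) * (n + 1)) / qP q q (n + 1))
          = ∑ n ∈ range M, qBinom q M (n + 1) * (q ^ ((n + 1) * (n + 1)) / qP q q (n + 1))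
            + ∑ n ∈ range (M + 1), q ^ (M - n) * qBinom q M n *
                (q ^ ((n + 1) * (n + 1)) / qP q q (n + 1)) := by
        rw [Finset.sum_range_succ (fun n => q ^ (M - n) * qBinom q M n *
          (q ^ ((n + 1) * (n + 1)) / qP q q (n + 1))), Finset.sum_range_succ, ← add_assoc,
          ← Finset.sum_add_distrib]
        congr 1
        · apply Finset.sum_congr rfl; intro n hn
          have hnM : n < M := Finset.mem_range.mp hn
          rw [pascal2 q hq hnM]; ring
        · rw [qBinom_self q hq, qBinom_self q hq, Nat.sub_self, pow_zero]; ring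
      have W : ∑ n ∈ range (M + 1), q ^ (M - n) * qBinom q M n *
            (q ^ ((n + 1) * (n + 1)) / qP q q (n + 1))
          = q ^ (M + 1) / (1 - q ^ (M + 1)) * (1 / qP q q M) := by
        rw [← ih1, Finset.mul_sum]
        apply Finset.sum_congr rfl; intro n hn
        have hn' : n < M + 1 := Finset.mem_range.mp hn
        obtain ⟨d, rfl⟩ : ∃ d, M = n + d := ⟨M - n, by omega⟩
        have hr := qBinom_ratio q hq (show n ≤ n + d by omega)
        have h2 : qBinom q (n + d) n
            = qBinom q (n + d + 1) (n + 1) * (1 - q ^ (n + 1)) / (1 - q ^ (n + d + 1)) :=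
          (eq_div_iff (hq (n + d))).mpr hr.symm
        rw [show n + d - n = d by omega, h2, qP_succ q n]
        have h3 := hP n
        have h4 := hq n
        have h5 := hq (n + d)
        field_simp
        ring
      rw [Finset.sum_range_succ']
      simp only [zero_mul, pow_zero, qP_zero, qBinom_zero q hq, one_mul, div_one]
      rw [split, W]
      rw [Finset.sum_range_succ'] at ihh
      simp only [zero_mul, pow_zero, qP_zero, qBinom_zero q hq, one_mul, div_one] at ihh
      rw [add_comm (∑ n ∈ range M, qBinom q M (n + 1) *
        (q ^ ((n + 1) * (n + 1)) / qP q q (n + 1))) _, add_assoc, ihh, qP_succ q M]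
      have h3 := hP M
      have h4 := hq M
      field_simp
      ring
    intro j
    induction j with
    | zero => simpa using t0
    | succ j ihj =>
      show ∑ k ∈ range (M + 1 + 1), qBinom q (M + 1 + j + 1) (k + j + 1) *
          (q ^ (k * (k + j + 1)) / qP q q k) = 1 / qP q q (M + 1)
      rw [Tstep q hq j (M + 1)]
      exact ihj

lemma main_range (q : ℂ) (hq : ∀ k : ℕ, 1 - q ^ (k + 1) ≠ 0) :
    ∀ N : ℕ, ∑ n ∈ range N, q ^ (n + 1) / (1 - q ^ (n + 1))
      + ∑ n ∈ range N, qBinom q N (n + 1) *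
          (q ^ ((n + 1) * (n + 1 + 1)) / (qP q q (n + 1) * (1 - q ^ (n + 1))))
      = ∑ n ∈ range N, q ^ (n + 1) / ((1 - q ^ (n + 1)) * qP q q (n + 1)) := by
  have hP := qP_ne q hq
  intro N
  induction N with
  | zero => simp
  | succ N ih =>
    have hd : ∑ n ∈ range (N + 1), qBinom q (N + 1) (n + 1) *
          (q ^ ((n + 1) * (n + 1)) / qP q q (n + 1))
        = 1 / qP q q (N + 1) - 1 := by
      have h := durfee q hq (N + 1) 0
      simp only [Nat.add_zero] at h
      rw [Finset.sum_range_succ'] at h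
      simp only [zero_mul, pow_zero, qP_zero, qBinom_zero q hq, one_mul, div_one] at h
      exact eq_sub_of_add_eq h
    have hS2 : ∑ n ∈ range (N + 1), qBinom q (N + 1) (n + 1) *
          (q ^ ((n + 1) * (n + 1 + 1)) / (qP q q (n + 1) * (1 - q ^ (n + 1))))
        = ∑ n ∈ range N, qBinom q N (n + 1) *
            (q ^ ((n + 1) * (n + 1 + 1)) / (qP q q (n + 1) * (1 - q ^ (n + 1))))
          + ∑ n ∈ range (N + 1), q ^ (N - n) * qBinom q N n *
              (q ^ ((n + 1) * (n + 1 + 1)) / (qP q q (n + 1) * (1 - q ^ (n + 1)))) := by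
      rw [Finset.sum_range_succ (fun n => q ^ (N - n) * qBinom q N n *
        (q ^ ((n + 1) * (n + 1 + 1)) / (qP q q (n + 1) * (1 - q ^ (n + 1))))),
        Finset.sum_range_succ, ← add_assoc, ← Finset.sum_add_distrib]
      congr 1
      · apply Finset.sum_congr rfl; intro n hn
        have hnN : n < N := Finset.mem_range.mp hn
        rw [pascal2 q hq hnN]; ring
      · rw [qBinom_self q hq, qBinom_self q hq, Nat.sub_self, pow_zero]; ring
    have W2 : ∑ n ∈ range (N + 1), q ^ (N - n) * qBinom q N n *
          (q ^ ((n + 1) * (n + 1 + 1)) / (qP q q (n + 1) * (1 - q ^ (n + 1))))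
        = q ^ (N + 1) / (1 - q ^ (N + 1)) * (1 / qP q q (N + 1) - 1) := by
      rw [← hd, Finset.mul_sum]
      apply Finset.sum_congr rfl; intro n hn
      have hn' : n < N + 1 := Finset.mem_range.mp hn
      obtain ⟨d, rfl⟩ : ∃ d, N = n + d := ⟨N - n, by omega⟩
      have hr := qBinom_ratio q hq (show n ≤ n + d by omega)
      have h2 : qBinom q (n + d) n
          = qBinom q (n + d + 1) (n + 1) * (1 - q ^ (n + 1)) / (1 - q ^ (n + d + 1)) :=
        (eq_div_iff (hq (n + d))).mpr hr.symm
      rw [show n + d - n = d by omega, h2, qP_succ q n]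
      have h3 := hP n
      have h4 := hq n
      have h5 := hq (n + d)
      field_simp
      ring
    rw [Finset.sum_range_succ, hS2, W2, Finset.sum_range_succ
      (fun n => q ^ (n + 1) / ((1 - q ^ (n + 1)) * qP q q (n + 1))), ← ih]
    have h3 := hP (N + 1)
    have h4 := hq N
    field_simp
    ring

theorem stmt_15 (N : ℕ) (hN : 1 ≤ N) (q : ℂ) (hq : ‖q‖ < 1) :
    ∑ n ∈ Finset.Icc 1 N, q ^ n / (1 - q ^ n) +
        ∑ n ∈ Finset.Icc 1 N, qBinom q N n * (q ^ (n * (n + 1)) / (qP q q n * (1 - q ^ n))) =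
      ∑ n ∈ Finset.Icc 1 N, q ^ n / ((1 - q ^ n) * qP q q n) := by
  have hq' : ∀ k : ℕ, 1 - q ^ (k + 1) ≠ 0 := by
    intro k
    have h1 : ‖q ^ (k + 1)‖ < 1 := by
      rw [norm_pow]
      exact pow_lt_one₀ (norm_nonneg q) hq (Nat.succ_ne_zero k)
    intro h
    rw [sub_eq_zero] at h
    rw [← h] at h1
    simp at h1
  have := main_range q hq' N
  rw [← Finset.Ico_add_one_right_eq_Icc, Finset.sum_Ico_eq_sum_range, Finset.sum_Ico_eq_sum_range,
    Finset.sum_Ico_eq_sum_range]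
  simp only [Nat.succ_sub_one, add_comm 1]
  exact this
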